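/- arXiv:2407.13257 — 2 statements merged into one kernel-verified Lean document; each statement's English description precedes it below -/
import Mathlib

section
/- Let X = {x ∈ ℝ^n : hⱼᵀx ≤ 1, j = 1,…,p} be a polytope, M ∈ ℝ^{n×n} symmetric positive definite, σ ≥ 0, and D = {e : eᵀMe ≤ σ}. Then the Pontryagin difference satisfies X ⊖ D = {x : hⱼᵀx ≤ 1 - cⱼ√σ, j = 1,…,p}, where cⱼ = ‖M^{-1/2}hⱼ‖. -/
open Matrix

/-- symmetry swap for dot products with a symmetric matrix -/
lemma symm_dot {n : ℕ} {R : Matrix (Fin n) (Fin n) ℝ} (hsym : Rᵀ = R)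
    (a b : Fin n → ℝ) : a ⬝ᵥ R *ᵥ b = (R *ᵥ a) ⬝ᵥ b := by
  rw [dotProduct_mulVec, ← Matrix.mulVec_transpose, hsym]

lemma dot_self_nonneg {n : ℕ} (v : Fin n → ℝ) : 0 ≤ v ⬝ᵥ v :=
  Finset.sum_nonneg fun i _ => mul_self_nonneg (v i)

lemma cauchy_dot {n : ℕ} (v u : Fin n → ℝ) :
    v ⬝ᵥ u ≤ Real.sqrt (v ⬝ᵥ v) * Real.sqrt (u ⬝ᵥ u) := by
  simpa [dotProduct, sq] using Real.sum_mul_le_sqrt_mul_sqrt Finset.univ v u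

/-- Pontryagin difference of a polytope and an ellipsoid. `R` is the symmetric
positive definite square root of `M`, so `R⁻¹ = M^{-1/2}`. -/
theorem stmt_5 {n p : ℕ} (h : Fin p → Fin n → ℝ)
    (M R : Matrix (Fin n) (Fin n) ℝ) (hM : M.PosDef) (hR : R.PosDef) (hRR : R * R = M)
    (σ : ℝ) (hσ : 0 ≤ σ) :
    {x : Fin n → ℝ | ∀ e : Fin n → ℝ, e ⬝ᵥ M *ᵥ e ≤ σ →
        x + e ∈ {y : Fin n → ℝ | ∀ j, h j ⬝ᵥ y ≤ 1}} =
      {x : Fin n → ℝ | ∀ j,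
        h j ⬝ᵥ x ≤ 1 - Real.sqrt ((R⁻¹ *ᵥ h j) ⬝ᵥ (R⁻¹ *ᵥ h j)) * Real.sqrt σ} := by
  have hsym : Rᵀ = R := by
    have := hR.isHermitian
    simpa [Matrix.IsHermitian, Matrix.conjTranspose_eq_transpose_of_trivial] using this
  have hsyminv : (R⁻¹)ᵀ = R⁻¹ := by rw [Matrix.transpose_nonsing_inv, hsym]
  have hdet : IsUnit R.det := isUnit_iff_ne_zero.mpr hR.det_pos.ne'
  have hRinv : R * R⁻¹ = 1 := Matrix.mul_nonsing_inv R hdet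
  have hv : ∀ w : Fin n → ℝ, R *ᵥ (R⁻¹ *ᵥ w) = w := by
    intro w
    rw [Matrix.mulVec_mulVec, hRinv, Matrix.one_mulVec]
  have hMe : ∀ e : Fin n → ℝ, e ⬝ᵥ M *ᵥ e = (R *ᵥ e) ⬝ᵥ (R *ᵥ e) := by
    intro e
    rw [← hRR, ← Matrix.mulVec_mulVec, symm_dot hsym]
  ext x
  simp only [Set.mem_setOf_eq]
  constructor
  · intro hx j
    set v := R⁻¹ *ᵥ h j with hvdef
    by_cases hv0 : v ⬝ᵥ v = 0
    · have := hx 0 (by simp [hMe]; exact hσ)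
      simpa [hv0] using this j
    · have hvpos : 0 < v ⬝ᵥ v := lt_of_le_of_ne (dot_self_nonneg v) (Ne.symm hv0)
      set c : ℝ := Real.sqrt σ / Real.sqrt (v ⬝ᵥ v) with hc
      have hsv : (0:ℝ) < Real.sqrt (v ⬝ᵥ v) := Real.sqrt_pos.mpr hvpos
      have hsq : Real.sqrt (v ⬝ᵥ v) ^ 2 = v ⬝ᵥ v := Real.sq_sqrt hvpos.le
      have hsσ : Real.sqrt σ ^ 2 = σ := Real.sq_sqrt hσ
      -- h j ⬝ᵥ (R⁻¹ *ᵥ v) = v ⬝ᵥ v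
      have hjv : h j ⬝ᵥ (R⁻¹ *ᵥ v) = v ⬝ᵥ v := by
        rw [symm_dot hsyminv]
      have hmem : (c • (R⁻¹ *ᵥ v)) ⬝ᵥ M *ᵥ (c • (R⁻¹ *ᵥ v)) ≤ σ := by
        rw [hMe, Matrix.mulVec_smul, hv v]
        have h1 : (c • v) ⬝ᵥ (c • v) = c ^ 2 * (v ⬝ᵥ v) := by
          rw [dotProduct_smul, smul_dotProduct, smul_eq_mul, smul_eq_mul, sq]; ring
        rw [h1, hc, div_pow, hsσ, hsq, div_mul_cancel₀ _ hv0]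
      have key := hx (c • (R⁻¹ *ᵥ v)) hmem j
      rw [dotProduct_add, dotProduct_smul, hjv, smul_eq_mul] at key
      have hcvv : c * (v ⬝ᵥ v) = Real.sqrt (v ⬝ᵥ v) * Real.sqrt σ := by
        rw [hc, div_mul_eq_mul_div, div_eq_iff hsv.ne']
        linear_combination -Real.sqrt σ * hsq
      linarith
  · intro hx e he j
    have hu : (R *ᵥ e) ⬝ᵥ (R *ᵥ e) ≤ σ := by rw [← hMe]; exact he
    set v := R⁻¹ *ᵥ h j
    have hje : v ⬝ᵥ (R *ᵥ e) = h j ⬝ᵥ e := by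
      rw [symm_dot hsym, hv (h j)]
    have hcs : v ⬝ᵥ (R *ᵥ e) ≤ Real.sqrt (v ⬝ᵥ v) * Real.sqrt σ := by
      calc v ⬝ᵥ (R *ᵥ e) ≤ Real.sqrt (v ⬝ᵥ v) * Real.sqrt ((R *ᵥ e) ⬝ᵥ (R *ᵥ e)) :=
            cauchy_dot _ _
        _ ≤ Real.sqrt (v ⬝ᵥ v) * Real.sqrt σ := by
            gcongr <;> first
              | exact dot_self_nonneg _
              | exact hu
    have hxj := hx j
    rw [dotProduct_add]
    rw [← hje]
    linarith
end

section
/- Let M ∈ ℝ^{n×n} be symmetric positive definite, f : ℝ^n → ℝ^n with f(0) = 0, and suppose ‖f(x) − f(z)‖²_M ≤ ρ‖x − z‖²_M for all x, z ∈ ℝ^n, with ρ ∈ [0,1). Let Q ∈ ℝ^{n×n} be symmetric positive definite, and define c_f = λ_max(Q, M)/(1 − ρ), where λ_max(Q, M) is the maximal generalized eigenvalue of Q with respect to M (i.e., the smallest λ with Q ⪯ λM). Then V_f(x) = c_f·‖x‖²_M satisfies V_f(f(x)) ≤ V_f(x) − ‖x‖²_Q for all x ∈ ℝ^n. -/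
open Matrix

theorem stmt_10 {n : ℕ} (M Q : Matrix (Fin n) (Fin n) ℝ)
    (hM : M.PosDef) (hQ : Q.PosDef)
    (f : (Fin n → ℝ) → (Fin n → ℝ)) (hf0 : f 0 = 0)
    (ρ : ℝ) (hρ0 : 0 ≤ ρ) (hρ1 : ρ < 1)
    (hcontr : ∀ x z : Fin n → ℝ,
      (f x - f z) ⬝ᵥ M *ᵥ (f x - f z) ≤ ρ * ((x - z) ⬝ᵥ M *ᵥ (x - z)))
    (lamMax : ℝ)
    (hlam : IsLeast {lam : ℝ | ∀ v : Fin n → ℝ, v ⬝ᵥ Q *ᵥ v ≤ lam * (v ⬝ᵥ M *ᵥ v)} lamMax) :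
    ∀ x : Fin n → ℝ,
      (lamMax / (1 - ρ)) * (f x ⬝ᵥ M *ᵥ f x) ≤
        (lamMax / (1 - ρ)) * (x ⬝ᵥ M *ᵥ x) - x ⬝ᵥ Q *ᵥ x := by
  have hρ : (0:ℝ) < 1 - ρ := by linarith
  have hlam0 : 0 ≤ lamMax := by
    rcases Nat.eq_zero_or_pos n with h0 | hpos
    · subst h0
      have := hlam.2 (show (lamMax - 1) ∈ _ from fun v => by
        simp [dotProduct])
      linarith
    · set v : Fin n → ℝ := Pi.single ⟨0, hpos⟩ 1 with hv
      have hvne : v ≠ 0 := by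
        intro h
        have := congrFun h ⟨0, hpos⟩
        simp [hv] at this
      have hQv : 0 < v ⬝ᵥ Q *ᵥ v := hQ.dotProduct_mulVec_pos hvne
      have hMv : 0 < v ⬝ᵥ M *ᵥ v := hM.dotProduct_mulVec_pos hvne
      have := hlam.1 v
      nlinarith
  intro x
  have h1 : (f x) ⬝ᵥ M *ᵥ (f x) ≤ ρ * (x ⬝ᵥ M *ᵥ x) := by
    have := hcontr x 0
    simpa [hf0] using this
  have h2 : x ⬝ᵥ Q *ᵥ x ≤ lamMax * (x ⬝ᵥ M *ᵥ x) := hlam.1 x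
  have hc : (lamMax / (1 - ρ)) * (1 - ρ) = lamMax := by
    field_simp
  have hc0 : 0 ≤ lamMax / (1 - ρ) := div_nonneg hlam0 (le_of_lt hρ)
  have h3 : lamMax * (x ⬝ᵥ M *ᵥ x) =
      (lamMax / (1 - ρ)) * (x ⬝ᵥ M *ᵥ x) - (lamMax / (1 - ρ)) * (ρ * (x ⬝ᵥ M *ᵥ x)) := by
    field_simp
  have h4 := mul_le_mul_of_nonneg_left h1 hc0
  linarith
end
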